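/- Let G : P2(ℝ^d) → (−∞,+∞] be proper, lower semicontinuous with respect to W2, and convex along generalized geodesics, with argmin G nonempty. Let {ε_n} ⊂ ℝ_{≥0} with ∑_n ε_n < ∞, let {τ_n} ⊂ ℝ_{>0}, and let {μ_n} ⊂ P2(ℝ^d) satisfy W2(μ_{n+1}, J_{τ_n}(μ_n)) ≤ ε_n for all n, where J_τ(μ) is the unique minimizer of ν ↦ G(ν) + (1/(2τ)) W2²(ν, μ). Then ∑_n W2²(J_{τ_n}(μ_n), μ_n) < ∞; in particular W2(J_{τ_n}(μ_n), μ_n) → 0 as n → ∞. -/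

import Mathlib

open MeasureTheory Filter Topology ENNReal

noncomputable section

/-- Euclidean space ℝ^d. -/
abbrev Ed (d : ℕ) := EuclideanSpace ℝ (Fin d)

/-- `P2 d`: Borel probability measures on ℝ^d with finite second moment. -/
def P2 (d : ℕ) : Set (Measure (Ed d)) :=
  {μ | IsProbabilityMeasure μ ∧ ∫⁻ x, ENNReal.ofReal (‖x‖ ^ 2) ∂μ < ⊤}

/-- A coupling of `μ` and `ν`. -/
def IsCoupling {d : ℕ} (γ : Measure (Ed d × Ed d)) (μ ν : Measure (Ed d)) : Prop :=
  IsProbabilityMeasure γ ∧ γ.map Prod.fst = μ ∧ γ.map Prod.snd = ν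

/-- `p`-th power transport cost of a plan `γ`. -/
def Wcost {d : ℕ} (p : ℝ) (γ : Measure (Ed d × Ed d)) : ℝ≥0∞ :=
  ∫⁻ z, ENNReal.ofReal (‖z.1 - z.2‖ ^ p) ∂γ

/-- Minimal `p`-th power transport cost between `μ` and `ν`. -/
def minCost {d : ℕ} (p : ℝ) (μ ν : Measure (Ed d)) : ℝ≥0∞ :=
  ⨅ γ : {γ : Measure (Ed d × Ed d) // IsCoupling γ μ ν}, Wcost p γ.1

/-- The `p`-Wasserstein distance. -/
def Wp {d : ℕ} (p : ℝ) (μ ν : Measure (Ed d)) : ℝ :=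
  (minCost p μ ν ^ (1 / p)).toReal

/-- The 2-Wasserstein distance. -/
def W2 {d : ℕ} (μ ν : Measure (Ed d)) : ℝ := Wp 2 μ ν

/-- Optimal transport plan for the quadratic cost. -/
def IsOptimalPlan {d : ℕ} (γ : Measure (Ed d × Ed d)) (μ ν : Measure (Ed d)) : Prop :=
  IsCoupling γ μ ν ∧ Wcost 2 γ = minCost 2 μ ν

/-- `curve` is a generalized geodesic between `μ0` and `μ1` with base `base`. -/
def IsGenGeodesic {d : ℕ} (curve : ℝ → Measure (Ed d))
    (μ0 μ1 base : Measure (Ed d)) : Prop :=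
  ∃ γ : Measure (Ed d × Ed d × Ed d),
    IsProbabilityMeasure γ ∧
    IsOptimalPlan (γ.map (fun z => (z.1, z.2.1))) base μ0 ∧
    IsOptimalPlan (γ.map (fun z => (z.1, z.2.2))) base μ1 ∧
    ∀ t ∈ Set.Icc (0 : ℝ) 1,
      curve t = γ.map (fun z => (1 - t) • z.2.1 + t • z.2.2)

/-- Convexity along generalized geodesics. -/
def ConvexAlongGenGeod {d : ℕ} (G : Measure (Ed d) → EReal) : Prop :=
  ∀ μ0 ∈ P2 d, ∀ μ1 ∈ P2 d, ∀ base ∈ P2 d,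
    ∃ curve : ℝ → Measure (Ed d), IsGenGeodesic curve μ0 μ1 base ∧
      ∀ t ∈ Set.Icc (0 : ℝ) 1,
        G (curve t) ≤ ((1 - t : ℝ) : EReal) * G μ0 + ((t : ℝ) : EReal) * G μ1

/-- `G` is proper: never `⊥` and finite somewhere on `P2`. -/
def ProperOn {d : ℕ} (G : Measure (Ed d) → EReal) : Prop :=
  (∀ μ, G μ ≠ ⊥) ∧ ∃ μ ∈ P2 d, G μ ≠ ⊤

/-- Sequential lower semicontinuity with respect to `W2`. -/
def LscW2 {d : ℕ} (G : Measure (Ed d) → EReal) : Prop :=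
  ∀ μ ∈ P2 d, ∀ s : ℕ → Measure (Ed d), (∀ n, s n ∈ P2 d) →
    Tendsto (fun n => W2 (s n) μ) atTop (𝓝 0) →
    G μ ≤ liminf (fun n => G (s n)) atTop

/-- The JKO (Moreau–Yosida) energy `ν ↦ G ν + (1/(2τ)) W2²(ν, μ)`. -/
def JKOEnergy {d : ℕ} (G : Measure (Ed d) → EReal) (τ : ℝ)
    (μ ν : Measure (Ed d)) : EReal :=
  G ν + ((1 / (2 * τ) * (W2 ν μ) ^ 2 : ℝ) : EReal)

/-- `ν` is a minimizer over `P2` of the JKO energy with base point `μ`. -/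
def IsJKOMin {d : ℕ} (G : Measure (Ed d) → EReal) (τ : ℝ)
    (μ ν : Measure (Ed d)) : Prop :=
  ν ∈ P2 d ∧ ∀ ρ ∈ P2 d, JKOEnergy G τ μ ν ≤ JKOEnergy G τ μ ρ

/-- `μ` is a global minimizer of `G` over `P2`. -/
def IsArgminG {d : ℕ} (G : Measure (Ed d) → EReal) (μ : Measure (Ed d)) : Prop :=
  μ ∈ P2 d ∧ ∀ ν ∈ P2 d, G μ ≤ G ν

/-- The infimum of `G` over `P2`. -/
def infG {d : ℕ} (G : Measure (Ed d) → EReal) : EReal := sInf (G '' P2 d)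

/-- Convergence in the topology `τ_{w,2}`: integrals of continuous functions with
subquadratic growth converge. -/
def TendstoWeak2 {d : ℕ} (s : ℕ → Measure (Ed d)) (μ : Measure (Ed d)) : Prop :=
  ∀ f : Ed d → ℝ, Continuous f →
    Tendsto (fun x => f x / (1 + ‖x‖ ^ 2)) (comap (fun x : Ed d => ‖x‖) atTop) (𝓝 0) →
    Tendsto (fun n => ∫ x, f x ∂(s n)) atTop (𝓝 (∫ x, f x ∂μ))

/-- Narrow convergence: integrals of bounded continuous functions converge. -/
def TendstoNarrow {d : ℕ} (s : ℕ → Measure (Ed d)) (μ : Measure (Ed d)) : Prop :=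
  ∀ f : Ed d → ℝ, Continuous f → (∃ M, ∀ x, |f x| ≤ M) →
    Tendsto (fun n => ∫ x, f x ∂(s n)) atTop (𝓝 (∫ x, f x ∂μ))

/-- The pushforward by the explicit gradient step `x ↦ x - τ ∇F(x)`. -/
def gradStep {d : ℕ} (f' : Ed d → Ed d) (τ : ℝ) (μ : Measure (Ed d)) : Measure (Ed d) :=
  μ.map (fun x => x - τ • f' x)

/-- The composite objective `G(μ) = ∫ F dμ + H(μ)`. -/
def Gsum {d : ℕ} (F : Ed d → ℝ) (H : Measure (Ed d) → EReal)
    (μ : Measure (Ed d)) : EReal :=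
  ((∫ x, F x ∂μ : ℝ) : EReal) + H μ

end

noncomputable section AuxProof

section Basic
variable {d : ℕ}

lemma rpow_two_eq (a : ℝ) : a ^ (2:ℝ) = a ^ 2 := by
  rw [show (2:ℝ) = ((2:ℕ):ℝ) by norm_num, Real.rpow_natCast]

lemma wcost_two (γ : Measure (Ed d × Ed d)) :
    Wcost 2 γ = ∫⁻ z, ENNReal.ofReal (‖z.1 - z.2‖ ^ 2) ∂γ := by
  unfold Wcost; simp_rw [rpow_two_eq]

lemma meas_cost : Measurable fun z : Ed d × Ed d => ENNReal.ofReal (‖z.1 - z.2‖ ^ 2) :=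
  (ENNReal.continuous_ofReal.comp (((continuous_fst.sub continuous_snd).norm).pow 2)).measurable

lemma meas_sqnorm : Measurable fun x : Ed d => ENNReal.ofReal (‖x‖ ^ 2) :=
  (ENNReal.continuous_ofReal.comp (continuous_norm.pow 2)).measurable

/-- second moment -/
def M2 {d : ℕ} (μ : Measure (Ed d)) : ℝ≥0∞ := ∫⁻ x, ENNReal.ofReal (‖x‖ ^ 2) ∂μ

lemma wcost_le_moments {γ : Measure (Ed d × Ed d)} {μ ν : Measure (Ed d)}
    (h : IsCoupling γ μ ν) : Wcost 2 γ ≤ 2 * M2 μ + 2 * M2 ν := by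
  rw [wcost_two]
  have hpt : ∀ z : Ed d × Ed d, ENNReal.ofReal (‖z.1 - z.2‖ ^ 2)
      ≤ ENNReal.ofReal (2 * ‖z.1‖ ^ 2) + ENNReal.ofReal (2 * ‖z.2‖ ^ 2) := by
    intro z
    rw [← ENNReal.ofReal_add (by positivity) (by positivity)]
    refine ENNReal.ofReal_le_ofReal ?_
    have h1 : ‖z.1 - z.2‖ ≤ ‖z.1‖ + ‖z.2‖ := norm_sub_le _ _
    nlinarith [norm_nonneg z.1, norm_nonneg z.2, norm_nonneg (z.1 - z.2),
      sq_nonneg (‖z.1‖ - ‖z.2‖), pow_le_pow_left₀ (norm_nonneg (z.1 - z.2)) h1 2]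
  calc ∫⁻ z, ENNReal.ofReal (‖z.1 - z.2‖ ^ 2) ∂γ
      ≤ ∫⁻ z, (ENNReal.ofReal (2 * ‖z.1‖ ^ 2) + ENNReal.ofReal (2 * ‖z.2‖ ^ 2)) ∂γ :=
        lintegral_mono hpt
    _ = ∫⁻ z, ENNReal.ofReal (2 * ‖(z : Ed d × Ed d).1‖ ^ 2) ∂γ
        + ∫⁻ z, ENNReal.ofReal (2 * ‖(z : Ed d × Ed d).2‖ ^ 2) ∂γ := by
        refine lintegral_add_left ?_ _
        exact (ENNReal.continuous_ofReal.comp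
          ((continuous_const.mul ((continuous_norm.comp continuous_fst).pow 2)))).measurable
    _ = 2 * M2 μ + 2 * M2 ν := by
        have hm : Measurable fun x : Ed d => ENNReal.ofReal (2 * ‖x‖ ^ 2) :=
          (ENNReal.continuous_ofReal.comp (continuous_const.mul
            (continuous_norm.pow 2))).measurable
        have e1 : ∫⁻ z, ENNReal.ofReal (2 * ‖(z : Ed d × Ed d).1‖ ^ 2) ∂γ
            = ∫⁻ x, ENNReal.ofReal (2 * ‖x‖ ^ 2) ∂μ := by
          rw [← h.2.1, lintegral_map hm measurable_fst]
        have e2 : ∫⁻ z, ENNReal.ofReal (2 * ‖(z : Ed d × Ed d).2‖ ^ 2) ∂γ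
            = ∫⁻ x, ENNReal.ofReal (2 * ‖x‖ ^ 2) ∂ν := by
          rw [← h.2.2, lintegral_map hm measurable_snd]
        rw [e1, e2]
        unfold M2
        rw [← lintegral_const_mul 2 meas_sqnorm, ← lintegral_const_mul 2 meas_sqnorm]
        congr 1 <;> · refine lintegral_congr fun x => ?_
                      rw [ENNReal.ofReal_mul (by norm_num)]
                      norm_num

lemma isCoupling_prod (μ ν : Measure (Ed d)) [IsProbabilityMeasure μ]
    [IsProbabilityMeasure ν] : IsCoupling (μ.prod ν) μ ν := by
  refine ⟨by infer_instance, ?_, ?_⟩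
  · rw [show (μ.prod ν).map Prod.fst = (μ.prod ν).fst from rfl, Measure.fst_prod]
  · rw [show (μ.prod ν).map Prod.snd = (μ.prod ν).snd from rfl, Measure.snd_prod]

instance coupling_nonempty (μ ν : Measure (Ed d)) [IsProbabilityMeasure μ]
    [IsProbabilityMeasure ν] : Nonempty {γ : Measure (Ed d × Ed d) // IsCoupling γ μ ν} :=
  ⟨⟨μ.prod ν, isCoupling_prod μ ν⟩⟩

lemma minCost_le_wcost {γ : Measure (Ed d × Ed d)} {μ ν : Measure (Ed d)}
    (h : IsCoupling γ μ ν) : minCost 2 μ ν ≤ Wcost 2 γ :=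
  iInf_le (fun γ : {γ : Measure (Ed d × Ed d) // IsCoupling γ μ ν} => Wcost 2 γ.1) ⟨γ, h⟩

lemma minCost_lt_top {μ ν : Measure (Ed d)} (hμ : μ ∈ P2 d) (hν : ν ∈ P2 d) :
    minCost 2 μ ν < ⊤ := by
  haveI := hμ.1; haveI := hν.1
  refine lt_of_le_of_lt (minCost_le_wcost (isCoupling_prod μ ν)) ?_
  refine lt_of_le_of_lt (wcost_le_moments (isCoupling_prod μ ν)) ?_
  have h1 : M2 μ < ⊤ := hμ.2
  have h2 : M2 ν < ⊤ := hν.2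
  finiteness

lemma isCoupling_swap {γ : Measure (Ed d × Ed d)} {μ ν : Measure (Ed d)}
    (h : IsCoupling γ μ ν) : IsCoupling (γ.map Prod.swap) ν μ := by
  haveI := h.1
  refine ⟨Measure.isProbabilityMeasure_map measurable_swap.aemeasurable, ?_, ?_⟩
  · rw [Measure.map_map measurable_fst measurable_swap]
    exact h.2.2
  · rw [Measure.map_map measurable_snd measurable_swap]
    exact h.2.1

lemma wcost_swap (γ : Measure (Ed d × Ed d)) :
    Wcost 2 (γ.map Prod.swap) = Wcost 2 γ := by
  rw [wcost_two, wcost_two, lintegral_map meas_cost measurable_swap]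
  refine lintegral_congr fun z => ?_
  simp [Prod.swap, norm_sub_rev z.2 z.1]

lemma minCost_comm (μ ν : Measure (Ed d)) : minCost 2 μ ν = minCost 2 ν μ := by
  have key : ∀ (a b : Measure (Ed d)), minCost 2 a b ≤ minCost 2 b a := by
    intro a b
    refine le_iInf fun γ => ?_
    rw [← wcost_swap γ.1]
    exact minCost_le_wcost (isCoupling_swap γ.2)
  exact le_antisymm (key μ ν) (key ν μ)

lemma W2_nonneg (μ ν : Measure (Ed d)) : 0 ≤ W2 μ ν := ENNReal.toReal_nonneg

lemma W2_sq (μ ν : Measure (Ed d)) : W2 μ ν ^ 2 = (minCost 2 μ ν).toReal := by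
  rw [W2, Wp, ← ENNReal.toReal_pow]
  congr 1
  rw [← ENNReal.rpow_natCast (minCost 2 μ ν ^ (1 / (2:ℝ))) 2, ← ENNReal.rpow_mul]
  norm_num

lemma W2_comm (μ ν : Measure (Ed d)) : W2 μ ν = W2 ν μ := by
  rw [W2, W2, Wp, Wp, minCost_comm]

end Basic


section Glue
open ProbabilityTheory
variable {d : ℕ}

lemma meas_aux {α : Type*} [MeasurableSpace α] {f g : α → Ed d}
    (hf : Measurable f) (hg : Measurable g) :
    Measurable fun a => ENNReal.ofReal (‖f a - g a‖ ^ 2) :=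
  ENNReal.measurable_ofReal.comp (((hf.sub hg).norm).pow_const 2)

lemma gluing {μ ν ρ : Measure (Ed d)} {γ₁ γ₂ : Measure (Ed d × Ed d)}
    (h₁ : IsCoupling γ₁ μ ν) (h₂ : IsCoupling γ₂ ν ρ) :
    ∃ γ : Measure (Ed d × Ed d), IsCoupling γ μ ρ ∧
      Wcost 2 γ ^ (1/2 : ℝ) ≤ Wcost 2 γ₁ ^ (1/2 : ℝ) + Wcost 2 γ₂ ^ (1/2 : ℝ) := by
  haveI := h₁.1; haveI := h₂.1
  haveI : IsProbabilityMeasure ν := by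
    rw [← h₂.2.1]; exact Measure.isProbabilityMeasure_map measurable_fst.aemeasurable
  set ρ₁ : Measure (Ed d × Ed d) := γ₁.map Prod.swap with hρ₁def
  haveI : IsProbabilityMeasure ρ₁ := Measure.isProbabilityMeasure_map measurable_swap.aemeasurable
  have hρ₁fst : ρ₁.fst = ν := by
    rw [Measure.fst, hρ₁def, Measure.map_map measurable_fst measurable_swap]
    exact h₁.2.2
  have hγ₂fst : γ₂.fst = ν := h₂.2.1
  set κ₁ := ρ₁.condKernel with hκ₁
  set κ₂ := γ₂.condKernel with hκ₂
  have hd₁ : ν ⊗ₘ κ₁ = ρ₁ := by rw [hκ₁, ← hρ₁fst]; exact ρ₁.disintegrate ρ₁.condKernel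
  have hd₂ : ν ⊗ₘ κ₂ = γ₂ := by rw [hκ₂, ← hγ₂fst]; exact γ₂.disintegrate γ₂.condKernel
  set m : Measure (Ed d × (Ed d × Ed d)) := ν ⊗ₘ (κ₁ ×ₖ κ₂) with hm
  haveI : IsProbabilityMeasure m := by rw [hm]; infer_instance
  set γ : Measure (Ed d × Ed d) := m.map Prod.snd with hγ
  have hmsnd : Measurable fun p : Ed d × (Ed d × Ed d) => p.2 := measurable_snd
  -- first marginal
  have hm1 : γ.map Prod.fst = μ := by
    rw [hγ, Measure.map_map measurable_fst measurable_snd]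
    ext s hs
    rw [Measure.map_apply (measurable_fst.comp measurable_snd) hs, hm,
      Measure.compProd_apply ((measurable_fst.comp measurable_snd) hs)]
    have hpre : ∀ y : Ed d, (Prod.mk y ⁻¹' ((Prod.fst ∘ Prod.snd : Ed d × (Ed d × Ed d) → Ed d) ⁻¹' s)) = s ×ˢ Set.univ := by
      intro y; ext q; simp [Set.mem_prod]
    have hval : ∀ y : Ed d, (κ₁ ×ₖ κ₂) y (s ×ˢ Set.univ) = κ₁ y s := by
      intro y
      rw [Kernel.prod_apply, Measure.prod_prod, measure_univ, mul_one]
    calc ∫⁻ y, (κ₁ ×ₖ κ₂) y (Prod.mk y ⁻¹' ((Prod.fst ∘ Prod.snd : Ed d × (Ed d × Ed d) → Ed d) ⁻¹' s)) ∂ν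
        = ∫⁻ y, κ₁ y s ∂ν := by
          refine lintegral_congr fun y => ?_; rw [hpre y, hval y]
      _ = (ν ⊗ₘ κ₁) (Set.univ ×ˢ s) := by
          rw [Measure.compProd_apply (MeasurableSet.univ.prod hs)]
          refine (lintegral_congr fun y => ?_).symm
          congr 1; ext x; simp
      _ = μ s := by
          rw [hd₁, hρ₁def, Measure.map_apply measurable_swap (MeasurableSet.univ.prod hs)]
          have hsw : Prod.swap ⁻¹' ((Set.univ : Set (Ed d)) ×ˢ s) = s ×ˢ Set.univ := by
            ext p; simp
          rw [hsw, ← h₁.2.1, Measure.map_apply measurable_fst hs]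
          congr 1; ext p; simp
  -- second marginal
  have hm2 : γ.map Prod.snd = ρ := by
    rw [hγ, Measure.map_map measurable_snd measurable_snd]
    ext s hs
    rw [Measure.map_apply (measurable_snd.comp measurable_snd) hs, hm,
      Measure.compProd_apply ((measurable_snd.comp measurable_snd) hs)]
    have hval : ∀ y : Ed d, (κ₁ ×ₖ κ₂) y (Prod.mk y ⁻¹' ((Prod.snd ∘ Prod.snd : Ed d × (Ed d × Ed d) → Ed d) ⁻¹' s)) = κ₂ y s := by
      intro y
      have hq : (Prod.mk y ⁻¹' ((Prod.snd ∘ Prod.snd : Ed d × (Ed d × Ed d) → Ed d) ⁻¹' s)) = Set.univ ×ˢ s := by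
        ext q; simp
      rw [hq, Kernel.prod_apply, Measure.prod_prod, measure_univ, one_mul]
    calc ∫⁻ y, (κ₁ ×ₖ κ₂) y (Prod.mk y ⁻¹' ((Prod.snd ∘ Prod.snd : Ed d × (Ed d × Ed d) → Ed d) ⁻¹' s)) ∂ν
        = ∫⁻ y, κ₂ y s ∂ν := lintegral_congr fun y => hval y
      _ = (ν ⊗ₘ κ₂) (Set.univ ×ˢ s) := by
          rw [Measure.compProd_apply (MeasurableSet.univ.prod hs)]
          refine (lintegral_congr fun y => ?_).symm
          congr 1; ext x; simp
      _ = ρ s := by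
          rw [hd₂, ← h₂.2.2, Measure.map_apply measurable_snd hs]
          congr 1; ext p; simp
  haveI : IsProbabilityMeasure γ := Measure.isProbabilityMeasure_map hmsnd.aemeasurable
  refine ⟨γ, ⟨by infer_instance, hm1, hm2⟩, ?_⟩
  -- cost estimate
  set g : Ed d × (Ed d × Ed d) → ℝ≥0∞ := fun w => ENNReal.ofReal ‖w.2.1 - w.1‖ with hg
  set h : Ed d × (Ed d × Ed d) → ℝ≥0∞ := fun w => ENNReal.ofReal ‖w.1 - w.2.2‖ with hh
  have hgm : Measurable g :=
    ENNReal.measurable_ofReal.comp (((measurable_fst.comp measurable_snd).sub measurable_fst).norm)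
  have hhm : Measurable h :=
    ENNReal.measurable_ofReal.comp ((measurable_fst.sub (measurable_snd.comp measurable_snd)).norm)
  have hsq : ∀ (a : ℝ), 0 ≤ a → ENNReal.ofReal a ^ (2:ℝ) = ENNReal.ofReal (a ^ 2) := by
    intro a ha
    rw [ENNReal.ofReal_pow ha, ← ENNReal.rpow_natCast (ENNReal.ofReal a) 2]
    norm_num
  have hcost : Wcost 2 γ = ∫⁻ w, (ENNReal.ofReal ‖w.2.1 - w.2.2‖) ^ (2:ℝ)
      ∂(m : Measure (Ed d × (Ed d × Ed d))) := by
    rw [wcost_two, hγ, lintegral_map (meas_aux measurable_fst measurable_snd) hmsnd]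
    exact lintegral_congr fun w => (hsq _ (norm_nonneg _)).symm
  have hptwise : ∀ w, (ENNReal.ofReal ‖w.2.1 - w.2.2‖) ^ (2:ℝ) ≤ ((g + h) w) ^ (2:ℝ) := by
    intro w
    refine ENNReal.rpow_le_rpow ?_ (by norm_num)
    show ENNReal.ofReal ‖w.2.1 - w.2.2‖ ≤ ENNReal.ofReal ‖w.2.1 - w.1‖ + ENNReal.ofReal ‖w.1 - w.2.2‖
    rw [← ENNReal.ofReal_add (norm_nonneg _) (norm_nonneg _)]
    exact ENNReal.ofReal_le_ofReal (norm_sub_le_norm_sub_add_norm_sub _ _ _)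
  have hint1 : ∫⁻ w, (g w) ^ (2:ℝ) ∂m = Wcost 2 γ₁ := by
    have hgw : ∀ w : Ed d × (Ed d × Ed d), (g w) ^ (2:ℝ) = ENNReal.ofReal (‖w.2.1 - w.1‖ ^ 2) :=
      fun w => hsq _ (norm_nonneg _)
    simp_rw [hgw]
    have hf1 : Measurable fun w : Ed d × Ed d × Ed d => ENNReal.ofReal (‖w.2.1 - w.1‖ ^ 2) :=
      meas_aux (measurable_fst.comp measurable_snd) measurable_fst
    rw [hm, Measure.lintegral_compProd hf1]
    have inner : ∀ y : Ed d, ∫⁻ q : Ed d × Ed d, ENNReal.ofReal (‖q.1 - y‖ ^ 2) ∂((κ₁ ×ₖ κ₂) y)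
        = ∫⁻ x, ENNReal.ofReal (‖x - y‖ ^ 2) ∂(κ₁ y) := by
      intro y
      rw [Kernel.prod_apply, lintegral_prod _ ((meas_aux measurable_fst measurable_const)).aemeasurable]
      calc (∫⁻ x, ∫⁻ z, ENNReal.ofReal (‖(x, z).1 - y‖ ^ 2) ∂(κ₂ y) ∂(κ₁ y))
          = ∫⁻ x, (∫⁻ _z, ENNReal.ofReal (‖x - y‖ ^ 2) ∂(κ₂ y)) ∂(κ₁ y) := rfl
        _ = ∫⁻ x, (ENNReal.ofReal (‖x - y‖ ^ 2)) * (κ₂ y) Set.univ ∂(κ₁ y) :=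
            lintegral_congr fun x => lintegral_const _
        _ = ∫⁻ x, ENNReal.ofReal (‖x - y‖ ^ 2) ∂(κ₁ y) := by
            refine lintegral_congr fun x => ?_; rw [measure_univ, mul_one]
    calc ∫⁻ y, ∫⁻ q : Ed d × Ed d, ENNReal.ofReal (‖q.1 - y‖ ^ 2) ∂((κ₁ ×ₖ κ₂) y) ∂ν
        = ∫⁻ y, ∫⁻ x, ENNReal.ofReal (‖x - y‖ ^ 2) ∂(κ₁ y) ∂ν := lintegral_congr inner
      _ = ∫⁻ p : Ed d × Ed d, ENNReal.ofReal (‖p.2 - p.1‖ ^ 2) ∂(ν ⊗ₘ κ₁) :=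
          (Measure.lintegral_compProd (meas_aux measurable_snd measurable_fst)).symm
      _ = Wcost 2 γ₁ := by
          rw [hd₁, hρ₁def, lintegral_map (meas_aux measurable_snd measurable_fst) measurable_swap,
            wcost_two]
          exact lintegral_congr fun z => rfl
  have hint2 : ∫⁻ w, (h w) ^ (2:ℝ) ∂m = Wcost 2 γ₂ := by
    have hhw : ∀ w : Ed d × (Ed d × Ed d), (h w) ^ (2:ℝ) = ENNReal.ofReal (‖w.1 - w.2.2‖ ^ 2) :=
      fun w => hsq _ (norm_nonneg _)
    simp_rw [hhw]
    have hf2 : Measurable fun w : Ed d × Ed d × Ed d => ENNReal.ofReal (‖w.1 - w.2.2‖ ^ 2) :=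
      meas_aux measurable_fst (measurable_snd.comp measurable_snd)
    rw [hm, Measure.lintegral_compProd hf2]
    have inner : ∀ y : Ed d, ∫⁻ q : Ed d × Ed d, ENNReal.ofReal (‖y - q.2‖ ^ 2) ∂((κ₁ ×ₖ κ₂) y)
        = ∫⁻ z, ENNReal.ofReal (‖y - z‖ ^ 2) ∂(κ₂ y) := by
      intro y
      rw [Kernel.prod_apply, lintegral_prod _ ((meas_aux measurable_const measurable_snd)).aemeasurable]
      calc (∫⁻ x, ∫⁻ z, ENNReal.ofReal (‖y - (x, z).2‖ ^ 2) ∂(κ₂ y) ∂(κ₁ y))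
          = ∫⁻ _x, (∫⁻ z, ENNReal.ofReal (‖y - z‖ ^ 2) ∂(κ₂ y)) ∂(κ₁ y) := rfl
        _ = (∫⁻ z, ENNReal.ofReal (‖y - z‖ ^ 2) ∂(κ₂ y)) * (κ₁ y) Set.univ := lintegral_const _
        _ = ∫⁻ z, ENNReal.ofReal (‖y - z‖ ^ 2) ∂(κ₂ y) := by rw [measure_univ, mul_one]
    calc ∫⁻ y, ∫⁻ q : Ed d × Ed d, ENNReal.ofReal (‖y - q.2‖ ^ 2) ∂((κ₁ ×ₖ κ₂) y) ∂ν
        = ∫⁻ y, ∫⁻ z, ENNReal.ofReal (‖y - z‖ ^ 2) ∂(κ₂ y) ∂ν := lintegral_congr inner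
      _ = ∫⁻ p : Ed d × Ed d, ENNReal.ofReal (‖p.1 - p.2‖ ^ 2) ∂(ν ⊗ₘ κ₂) :=
          (Measure.lintegral_compProd (meas_aux measurable_fst measurable_snd)).symm
      _ = Wcost 2 γ₂ := by rw [hd₂, wcost_two]
  calc Wcost 2 γ ^ (1/2:ℝ)
      ≤ (∫⁻ w, ((g + h) w) ^ (2:ℝ) ∂m) ^ (1/2:ℝ) := by
        rw [hcost]
        exact ENNReal.rpow_le_rpow (lintegral_mono hptwise) (by norm_num)
    _ ≤ (∫⁻ w, (g w) ^ (2:ℝ) ∂m) ^ (1/2:ℝ) + (∫⁻ w, (h w) ^ (2:ℝ) ∂m) ^ (1/2:ℝ) :=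
        ENNReal.lintegral_Lp_add_le hgm.aemeasurable hhm.aemeasurable (by norm_num)
    _ = Wcost 2 γ₁ ^ (1/2:ℝ) + Wcost 2 γ₂ ^ (1/2:ℝ) := by rw [hint1, hint2]

lemma minCost_rpow_triangle (μ ν ρ : Measure (Ed d))
    (hμ : IsProbabilityMeasure μ) (hν : IsProbabilityMeasure ν) (hρ : IsProbabilityMeasure ρ) :
    minCost 2 μ ρ ^ (1/2:ℝ) ≤ minCost 2 μ ν ^ (1/2:ℝ) + minCost 2 ν ρ ^ (1/2:ℝ) := by
  have hiso : ∀ (a b : Measure (Ed d)), minCost 2 a b ^ (1/2:ℝ)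
      = ⨅ γ : {γ : Measure (Ed d × Ed d) // IsCoupling γ a b}, Wcost 2 γ.1 ^ (1/2:ℝ) := by
    intro a b
    exact (ENNReal.orderIsoRpow (1/2) (by norm_num)).map_iInf _
  rw [hiso μ ν, hiso ν ρ, ENNReal.iInf_add]
  refine le_iInf fun γ₁ => ?_
  rw [ENNReal.add_iInf]
  refine le_iInf fun γ₂ => ?_
  obtain ⟨γ, hc, hle⟩ := gluing γ₁.2 γ₂.2
  calc minCost 2 μ ρ ^ (1/2:ℝ) ≤ Wcost 2 γ ^ (1/2:ℝ) :=
        ENNReal.rpow_le_rpow (minCost_le_wcost hc) (by norm_num)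
    _ ≤ Wcost 2 γ₁.1 ^ (1/2:ℝ) + Wcost 2 γ₂.1 ^ (1/2:ℝ) := hle

lemma W2_triangle (μ ν ρ : Measure (Ed d)) (hμ : μ ∈ P2 d) (hν : ν ∈ P2 d) (hρ : ρ ∈ P2 d) :
    W2 μ ρ ≤ W2 μ ν + W2 ν ρ := by
  have h := minCost_rpow_triangle μ ν ρ hμ.1 hν.1 hρ.1
  rw [W2, W2, W2, Wp, Wp, Wp]
  have f1 : minCost 2 μ ν ^ (1/(2:ℝ)) ≠ ⊤ :=
    ENNReal.rpow_ne_top_of_nonneg (by norm_num) (minCost_lt_top hμ hν).ne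
  have f2 : minCost 2 ν ρ ^ (1/(2:ℝ)) ≠ ⊤ :=
    ENNReal.rpow_ne_top_of_nonneg (by norm_num) (minCost_lt_top hν hρ).ne
  calc (minCost 2 μ ρ ^ (1/(2:ℝ))).toReal
      ≤ (minCost 2 μ ν ^ (1/(2:ℝ)) + minCost 2 ν ρ ^ (1/(2:ℝ))).toReal := by
        refine ENNReal.toReal_mono ?_ h
        exact ENNReal.add_ne_top.2 ⟨f1, f2⟩
    _ = _ := ENNReal.toReal_add f1 f2

end Glue

section Key
variable {d : ℕ}

lemma norm_combo (t : ℝ) (a b : Ed d) :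
    ‖(1 - t) • a + t • b‖ ^ 2
      = (1 - t) * ‖a‖ ^ 2 + t * ‖b‖ ^ 2 - t * (1 - t) * ‖a - b‖ ^ 2 := by
  rw [← real_inner_self_eq_norm_sq, ← real_inner_self_eq_norm_sq,
    ← real_inner_self_eq_norm_sq, ← real_inner_self_eq_norm_sq]
  simp only [inner_add_left, inner_add_right, inner_sub_left, inner_sub_right,
    real_inner_smul_left, real_inner_smul_right]
  rw [real_inner_comm b a]
  ring

lemma combo_sub (t : ℝ) (a b c : Ed d) :
    ((1 - t) • a + t • b) - c = (1 - t) • (a - c) + t • (b - c) := by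
  module

lemma integral_eq_toReal_lintegral {α : Type*} [MeasurableSpace α] {μ : Measure α}
    {f : α → ℝ} (hf : Measurable f) (h0 : ∀ x, 0 ≤ f x) :
    ∫ x, f x ∂μ = (∫⁻ x, ENNReal.ofReal (f x) ∂μ).toReal :=
  integral_eq_lintegral_of_nonneg_ae (Eventually.of_forall h0) hf.aestronglyMeasurable

lemma integrable_of_lint {α : Type*} [MeasurableSpace α] {μ : Measure α}
    {f : α → ℝ} (hf : Measurable f) (h0 : ∀ x, 0 ≤ f x)
    (hfin : ∫⁻ x, ENNReal.ofReal (f x) ∂μ < ⊤) : Integrable f μ := by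
  refine ⟨hf.aestronglyMeasurable, ?_⟩
  rw [hasFiniteIntegral_iff_ofReal (Eventually.of_forall h0)]
  exact hfin

set_option maxHeartbeats 1000000 in
/-- The main variational inequality. -/
lemma var_ineq (G : Measure (Ed d) → EReal) (hProper : ProperOn G)
    (hConv : ConvexAlongGenGeod G) {τ : ℝ} (hτ : 0 < τ)
    {μb η μs : Measure (Ed d)} (hμb : μb ∈ P2 d)
    (hmin : IsJKOMin G τ μb η) (hargm : IsArgminG G μs) :
    W2 η μb ^ 2 + W2 η μs ^ 2 ≤ W2 μs μb ^ 2 := by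
  obtain ⟨hη, hminle⟩ := hmin
  obtain ⟨hμs, hmins⟩ := hargm
  haveI : IsProbabilityMeasure μb := hμb.1
  haveI : IsProbabilityMeasure η := hη.1
  haveI : IsProbabilityMeasure μs := hμs.1
  -- G μs is finite
  obtain ⟨ρ0, hρ0P2, hρ0top⟩ := hProper.2
  have hGμs_top : G μs ≠ ⊤ := by
    intro h
    have h2 := hmins ρ0 hρ0P2
    rw [h] at h2
    exact hρ0top (top_le_iff.mp h2)
  set gs : ℝ := (G μs).toReal with hgs
  have hGμs : G μs = (gs : EReal) := (EReal.coe_toReal hGμs_top (hProper.1 μs)).symm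
  -- G η is finite
  have hGη_top : G η ≠ ⊤ := by
    intro h
    have := hminle μs hμs
    rw [JKOEnergy, JKOEnergy, h, hGμs] at this
    rw [EReal.top_add_of_ne_bot (by exact EReal.coe_ne_bot _), ← EReal.coe_add] at this
    exact lt_irrefl _ (lt_of_le_of_lt this (EReal.coe_lt_top _))
  set gη : ℝ := (G η).toReal with hgη
  have hGη : G η = (gη : EReal) := (EReal.coe_toReal hGη_top (hProper.1 η)).symm
  have hgsgη : gs ≤ gη := by
    have := hmins η hη
    rw [hGμs, hGη] at this
    exact EReal.coe_le_coe_iff.mp this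
  -- generalized geodesic
  obtain ⟨curve, ⟨γ, hγprob, hopt1, hopt2, hcurve⟩, hGconv⟩ := hConv η hη μs hμs μb hμb
  haveI := hγprob
  have hf12m : Measurable fun z : Ed d × Ed d × Ed d => (z.1, z.2.1) :=
    measurable_fst.prodMk (measurable_fst.comp measurable_snd)
  have hf13m : Measurable fun z : Ed d × Ed d × Ed d => (z.1, z.2.2) :=
    measurable_fst.prodMk (measurable_snd.comp measurable_snd)
  have hf23m : Measurable fun z : Ed d × Ed d × Ed d => (z.2.1, z.2.2) :=
    (measurable_fst.comp measurable_snd).prodMk (measurable_snd.comp measurable_snd)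
  -- marginals
  have hmb : γ.map (fun z : Ed d × Ed d × Ed d => z.1) = μb := by
    rw [← hopt1.1.2.1, Measure.map_map measurable_fst hf12m]; rfl
  have hmη : γ.map (fun z : Ed d × Ed d × Ed d => z.2.1) = η := by
    rw [← hopt1.1.2.2, Measure.map_map measurable_snd hf12m]; rfl
  have hmμs : γ.map (fun z : Ed d × Ed d × Ed d => z.2.2) = μs := by
    rw [← hopt2.1.2.2, Measure.map_map measurable_snd hf13m]; rfl
  -- the three basic real cost integrals
  set fA : Ed d × Ed d × Ed d → ℝ := fun z => ‖z.1 - z.2.1‖ ^ 2 with hfA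
  set fB : Ed d × Ed d × Ed d → ℝ := fun z => ‖z.1 - z.2.2‖ ^ 2 with hfB
  set fC : Ed d × Ed d × Ed d → ℝ := fun z => ‖z.2.1 - z.2.2‖ ^ 2 with hfC
  have hfAm : Measurable fA := ((measurable_fst.sub (measurable_fst.comp measurable_snd)).norm).pow_const 2
  have hfBm : Measurable fB := ((measurable_fst.sub (measurable_snd.comp measurable_snd)).norm).pow_const 2
  have hfCm : Measurable fC := (((measurable_fst.comp measurable_snd).sub (measurable_snd.comp measurable_snd)).norm).pow_const 2
  have hfA0 : ∀ z, 0 ≤ fA z := fun z => sq_nonneg _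
  have hfB0 : ∀ z, 0 ≤ fB z := fun z => sq_nonneg _
  have hfC0 : ∀ z, 0 ≤ fC z := fun z => sq_nonneg _
  -- lintegral identifications
  have hlA : ∫⁻ z, ENNReal.ofReal (fA z) ∂γ = Wcost 2 (γ.map (fun z => (z.1, z.2.1))) := by
    rw [wcost_two, lintegral_map (meas_aux measurable_fst measurable_snd) hf12m]
  have hlB : ∫⁻ z, ENNReal.ofReal (fB z) ∂γ = Wcost 2 (γ.map (fun z => (z.1, z.2.2))) := by
    rw [wcost_two, lintegral_map (meas_aux measurable_fst measurable_snd) hf13m]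
  have hlC : ∫⁻ z, ENNReal.ofReal (fC z) ∂γ = Wcost 2 (γ.map (fun z => (z.2.1, z.2.2))) := by
    rw [wcost_two, lintegral_map (meas_aux measurable_fst measurable_snd) hf23m]
  have hcoup23 : IsCoupling (γ.map (fun z : Ed d × Ed d × Ed d => (z.2.1, z.2.2))) η μs := by
    refine ⟨Measure.isProbabilityMeasure_map hf23m.aemeasurable, ?_, ?_⟩
    · rw [Measure.map_map measurable_fst hf23m]; exact hmη
    · rw [Measure.map_map measurable_snd hf23m]; exact hmμs
  have hfinA : ∫⁻ z, ENNReal.ofReal (fA z) ∂γ < ⊤ := by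
    rw [hlA, hopt1.2]; exact minCost_lt_top hμb hη
  have hfinB : ∫⁻ z, ENNReal.ofReal (fB z) ∂γ < ⊤ := by
    rw [hlB, hopt2.2]; exact minCost_lt_top hμb hμs
  have hfinC : ∫⁻ z, ENNReal.ofReal (fC z) ∂γ < ⊤ := by
    rw [hlC]
    refine lt_of_le_of_lt (wcost_le_moments hcoup23) ?_
    have h1 : M2 η < ⊤ := hη.2
    have h2 : M2 μs < ⊤ := hμs.2
    finiteness
  have hIA : Integrable fA γ := integrable_of_lint hfAm hfA0 hfinA
  have hIB : Integrable fB γ := integrable_of_lint hfBm hfB0 hfinB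
  have hIC : Integrable fC γ := integrable_of_lint hfCm hfC0 hfinC
  -- identification of the squared distances
  have hA : W2 η μb ^ 2 = ∫ z, fA z ∂γ := by
    rw [integral_eq_toReal_lintegral hfAm hfA0, hlA, hopt1.2, W2_sq, minCost_comm]
  have hB : W2 μs μb ^ 2 = ∫ z, fB z ∂γ := by
    rw [integral_eq_toReal_lintegral hfBm hfB0, hlB, hopt2.2, W2_sq, minCost_comm]
  have hC : W2 η μs ^ 2 ≤ ∫ z, fC z ∂γ := by
    rw [integral_eq_toReal_lintegral hfCm hfC0, hlC, W2_sq]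
    exact ENNReal.toReal_mono (hlC ▸ hfinC.ne) (minCost_le_wcost hcoup23)
  -- the inequality for each t
  have hkey : ∀ t ∈ Set.Ioo (0:ℝ) 1,
      W2 η μb ^ 2 + (1 - t) * (W2 η μs ^ 2) ≤ W2 μs μb ^ 2 := by
    rintro t ⟨ht0, ht1⟩
    have htIcc : t ∈ Set.Icc (0:ℝ) 1 := ⟨ht0.le, ht1.le⟩
    set mt : Ed d × Ed d × Ed d → Ed d := fun z => (1 - t) • z.2.1 + t • z.2.2 with hmt
    have hmtm : Measurable mt :=
      ((measurable_fst.comp measurable_snd).const_smul (1-t)).add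
        ((measurable_snd.comp measurable_snd).const_smul t)
    have hct : curve t = γ.map mt := hcurve t htIcc
    haveI : IsProbabilityMeasure (γ.map mt) := Measure.isProbabilityMeasure_map hmtm.aemeasurable
    -- bound for the moment of curve t
    have hmom : ∀ z : Ed d × Ed d × Ed d, ENNReal.ofReal (‖mt z‖ ^ 2)
        ≤ ENNReal.ofReal (2 * ‖z.2.1‖ ^ 2) + ENNReal.ofReal (2 * ‖z.2.2‖ ^ 2) := by
      intro z
      rw [← ENNReal.ofReal_add (by positivity) (by positivity)]
      refine ENNReal.ofReal_le_ofReal ?_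
      have h1 : ‖mt z‖ ≤ ‖z.2.1‖ + ‖z.2.2‖ := by
        refine le_trans (norm_add_le _ _) ?_
        rw [norm_smul, norm_smul, Real.norm_eq_abs, Real.norm_eq_abs,
          abs_of_nonneg (by linarith), abs_of_nonneg ht0.le]
        nlinarith [norm_nonneg z.2.1, norm_nonneg z.2.2]
      nlinarith [norm_nonneg z.2.1, norm_nonneg z.2.2, norm_nonneg (mt z),
        sq_nonneg (‖z.2.1‖ - ‖z.2.2‖), pow_le_pow_left₀ (norm_nonneg (mt z)) h1 2]
    have hmom2 : ∫⁻ x, ENNReal.ofReal (‖x‖ ^ 2) ∂(γ.map mt) < ⊤ := by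
      rw [lintegral_map meas_sqnorm hmtm]
      have hm2a : Measurable fun z : Ed d × Ed d × Ed d => ENNReal.ofReal (2 * ‖z.2.1‖ ^ 2) :=
        ENNReal.measurable_ofReal.comp
          ((((measurable_fst.comp measurable_snd).norm).pow_const 2).const_mul 2)
      have key : ∫⁻ z, ENNReal.ofReal (‖mt z‖ ^ 2) ∂γ
          ≤ ∫⁻ z, (ENNReal.ofReal (2 * ‖(z : Ed d × Ed d × Ed d).2.1‖ ^ 2)
              + ENNReal.ofReal (2 * ‖z.2.2‖ ^ 2)) ∂γ := lintegral_mono hmom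
      refine lt_of_le_of_lt key ?_
      rw [lintegral_add_left hm2a]
      have hmono2 : Measurable fun x : Ed d => ENNReal.ofReal (2 * ‖x‖ ^ 2) :=
        ENNReal.measurable_ofReal.comp ((measurable_norm.pow_const 2).const_mul 2)
      have hp21 : Measurable fun z : Ed d × Ed d × Ed d => z.2.1 :=
        measurable_fst.comp measurable_snd
      have hp22 : Measurable fun z : Ed d × Ed d × Ed d => z.2.2 :=
        measurable_snd.comp measurable_snd
      have e1 : ∫⁻ z, ENNReal.ofReal (2 * ‖(z : Ed d × Ed d × Ed d).2.1‖ ^ 2) ∂γ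
          = ∫⁻ x, ENNReal.ofReal (2 * ‖x‖ ^ 2) ∂η := by
        rw [← hmη, lintegral_map hmono2 hp21]
      have e2 : ∫⁻ z, ENNReal.ofReal (2 * ‖(z : Ed d × Ed d × Ed d).2.2‖ ^ 2) ∂γ
          = ∫⁻ x, ENNReal.ofReal (2 * ‖x‖ ^ 2) ∂μs := by
        rw [← hmμs, lintegral_map hmono2 hp22]
      have e3 : ∀ (θ : Measure (Ed d)), ∫⁻ x, ENNReal.ofReal (2 * ‖x‖ ^ 2) ∂θ
          = 2 * ∫⁻ x, ENNReal.ofReal (‖x‖ ^ 2) ∂θ := by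
        intro θ
        rw [← lintegral_const_mul 2 meas_sqnorm]
        refine lintegral_congr fun x => ?_
        rw [ENNReal.ofReal_mul (by norm_num)]; norm_num
      rw [e1, e2, e3, e3]
      have h1 : ∫⁻ x, ENNReal.ofReal (‖x‖ ^ 2) ∂η < ⊤ := hη.2
      have h2 : ∫⁻ x, ENNReal.ofReal (‖x‖ ^ 2) ∂μs < ⊤ := hμs.2
      finiteness
    have hctP2 : curve t ∈ P2 d := by
      rw [hct]; exact ⟨by infer_instance, hmom2⟩
    -- coupling of curve t with μb
    have hmtc : Measurable fun z : Ed d × Ed d × Ed d => (mt z, z.1) :=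
      hmtm.prodMk measurable_fst
    have hcoupt : IsCoupling (γ.map (fun z => (mt z, z.1))) (curve t) μb := by
      refine ⟨Measure.isProbabilityMeasure_map hmtc.aemeasurable, ?_, ?_⟩
      · rw [Measure.map_map measurable_fst hmtc, hct]; rfl
      · rw [Measure.map_map measurable_snd hmtc]; exact hmb
    set fQ : Ed d × Ed d × Ed d → ℝ := fun z => ‖mt z - z.1‖ ^ 2 with hfQ
    have hfQm : Measurable fQ := ((hmtm.sub measurable_fst).norm).pow_const 2
    have hfQ0 : ∀ z, 0 ≤ fQ z := fun z => sq_nonneg _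
    have hlQ : ∫⁻ z, ENNReal.ofReal (fQ z) ∂γ = Wcost 2 (γ.map (fun z => (mt z, z.1))) := by
      rw [wcost_two, lintegral_map (meas_aux measurable_fst measurable_snd) hmtc]
    have hfinQ : ∫⁻ z, ENNReal.ofReal (fQ z) ∂γ < ⊤ := by
      rw [hlQ]
      refine lt_of_le_of_lt (wcost_le_moments hcoupt) ?_
      have h1 : M2 (curve t) < ⊤ := hctP2.2
      have h2 : M2 μb < ⊤ := hμb.2
      finiteness
    -- squared distance of curve t to μb
    have hQ : W2 (curve t) μb ^ 2 ≤ ∫ z, fQ z ∂γ := by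
      rw [integral_eq_toReal_lintegral hfQm hfQ0, hlQ, W2_sq]
      exact ENNReal.toReal_mono (hlQ ▸ hfinQ.ne) (minCost_le_wcost hcoupt)
    -- pointwise quadratic identity
    have hptid : ∀ z : Ed d × Ed d × Ed d,
        fQ z = (1 - t) * fA z + t * fB z - t * (1 - t) * fC z := by
      intro z
      have e1 : mt z - z.1 = (1 - t) • (z.2.1 - z.1) + t • (z.2.2 - z.1) := combo_sub t _ _ _
      rw [hfQ]
      show ‖mt z - z.1‖ ^ 2 = _
      rw [e1, norm_combo t (z.2.1 - z.1) (z.2.2 - z.1)]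
      have e2 : z.2.1 - z.1 - (z.2.2 - z.1) = z.2.1 - z.2.2 := by abel
      rw [e2]
      show _ = (1 - t) * ‖z.1 - z.2.1‖ ^ 2 + t * ‖z.1 - z.2.2‖ ^ 2 - t * (1-t) * ‖z.2.1 - z.2.2‖ ^ 2
      rw [norm_sub_rev z.2.1 z.1, norm_sub_rev z.2.2 z.1]
    -- integrated identity
    have hQint : ∫ z, fQ z ∂γ
        = (1 - t) * (∫ z, fA z ∂γ) + t * (∫ z, fB z ∂γ) - t * (1 - t) * (∫ z, fC z ∂γ) := by
      have hcongr : ∫ z, fQ z ∂γ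
          = ∫ z, ((1 - t) * fA z + t * fB z - t * (1 - t) * fC z) ∂γ :=
        integral_congr_ae (Eventually.of_forall fun z => hptid z)
      have hIA' : Integrable (fun z => (1 - t) * fA z) γ := hIA.const_mul _
      have hIB' : Integrable (fun z => t * fB z) γ := hIB.const_mul _
      have hIC' : Integrable (fun z => t * (1 - t) * fC z) γ := hIC.const_mul _
      have hI1 : Integrable (fun z => (1 - t) * fA z + t * fB z) γ := hIA'.add hIB'
      rw [hcongr, integral_sub hI1 hIC', integral_add hIA' hIB',
        integral_const_mul, integral_const_mul, integral_const_mul]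
    -- JKO minimality at curve t
    set Ai := ∫ z, fA z ∂γ with hAi
    set Bi := ∫ z, fB z ∂γ with hBi
    set Ci := ∫ z, fC z ∂γ with hCi
    set Qt : ℝ := (1 - t) * Ai + t * Bi - t * (1 - t) * Ci with hQt
    have hjko : G η + ((1 / (2 * τ) * W2 η μb ^ 2 : ℝ) : EReal)
        ≤ G (curve t) + ((1 / (2 * τ) * W2 (curve t) μb ^ 2 : ℝ) : EReal) :=
      hminle (curve t) hctP2
    have hGc' : G (curve t) ≤ (((1 - t) * gη + t * gs : ℝ) : EReal) := by
      have h := hGconv t htIcc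
      rw [hGη, hGμs, ← EReal.coe_mul, ← EReal.coe_mul, ← EReal.coe_add] at h
      exact h
    have hW2c' : (1 / (2 * τ) * W2 (curve t) μb ^ 2 : ℝ) ≤ 1 / (2 * τ) * Qt := by
      refine mul_le_mul_of_nonneg_left ?_ (by positivity)
      rw [hQt]
      exact le_trans hQ (le_of_eq hQint)
    have h1 : ((gη + 1 / (2 * τ) * W2 η μb ^ 2 : ℝ) : EReal)
        ≤ (((1 - t) * gη + t * gs + 1 / (2 * τ) * Qt : ℝ) : EReal) := by
      calc ((gη + 1 / (2 * τ) * W2 η μb ^ 2 : ℝ) : EReal)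
          = G η + ((1 / (2 * τ) * W2 η μb ^ 2 : ℝ) : EReal) := by rw [hGη, EReal.coe_add]
        _ ≤ G (curve t) + ((1 / (2 * τ) * W2 (curve t) μb ^ 2 : ℝ) : EReal) := hjko
        _ ≤ (((1 - t) * gη + t * gs : ℝ) : EReal) + ((1 / (2 * τ) * Qt : ℝ) : EReal) :=
            add_le_add hGc' (EReal.coe_le_coe_iff.mpr hW2c')
        _ = _ := by rw [← EReal.coe_add]
    have hre : gη + 1 / (2 * τ) * W2 η μb ^ 2
        ≤ (1 - t) * gη + t * gs + 1 / (2 * τ) * Qt := EReal.coe_le_coe_iff.mp h1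
    -- now pure real algebra
    rw [hA, hB]
    have hCnn : (0:ℝ) ≤ Ci := integral_nonneg hfC0
    have htau : (0:ℝ) < 1 / (2 * τ) := by positivity
    have hC2 : W2 η μs ^ 2 ≤ Ci := hC
    rw [hA, hQt] at hre
    have hstep : Ai + (1 - t) * Ci ≤ Bi := by
      have h1 : t * (gη - gs) + 1 / (2 * τ) * t * (Ai - Bi + (1 - t) * Ci) ≤ 0 := by
        nlinarith [hre]
      have h2 : 1 / (2 * τ) * t * (Ai - Bi + (1 - t) * Ci) ≤ 0 := by
        nlinarith [mul_nonneg ht0.le (sub_nonneg.mpr hgsgη)]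
      nlinarith [mul_pos htau ht0, h2]
    calc Ai + (1 - t) * W2 η μs ^ 2 ≤ Ai + (1 - t) * Ci := by nlinarith [hC2]
      _ ≤ Bi := hstep
  -- pass to the limit t → 0
  have hseq : ∀ n : ℕ, W2 η μb ^ 2 + (1 - (1 / (n + 2) : ℝ)) * (W2 η μs ^ 2) ≤ W2 μs μb ^ 2 := by
    intro n
    refine hkey _ ⟨by positivity, ?_⟩
    rw [div_lt_one (by positivity)]
    linarith [Nat.cast_nonneg (α := ℝ) n]
  have hlim : Tendsto (fun n : ℕ => W2 η μb ^ 2 + (1 - (1 / (n + 2) : ℝ)) * (W2 η μs ^ 2))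
      atTop (𝓝 (W2 η μb ^ 2 + (1 - 0) * (W2 η μs ^ 2))) := by
    refine Tendsto.const_add _ (Tendsto.mul_const _ (Tendsto.const_sub _ ?_))
    have : Tendsto (fun n : ℕ => ((n : ℝ) + 2)) atTop atTop :=
      tendsto_atTop_add_const_right _ 2 tendsto_natCast_atTop_atTop
    exact Tendsto.comp tendsto_inv_atTop_zero this |>.congr (fun n => by simp [one_div])
  have := le_of_tendsto hlim (Eventually.of_forall hseq)
  linarith [this]

end Key


section Fejer

lemma fejer (a b c ε : ℕ → ℝ) (ha : ∀ n, 0 ≤ a n) (hb : ∀ n, 0 ≤ b n)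
    (hc : ∀ n, 0 ≤ c n) (hε : ∀ n, 0 ≤ ε n) (hεs : Summable ε)
    (hkey : ∀ n, b n ^ 2 + c n ^ 2 ≤ a n ^ 2)
    (htri : ∀ n, a (n + 1) ≤ c n + ε n) :
    Summable (fun n => b n ^ 2) := by
  set E := ∑' n, ε n with hE
  have hE0 : 0 ≤ E := tsum_nonneg hε
  have hεE : ∀ n, ε n ≤ E := fun n => hεs.le_tsum n (fun m _ => hε m)
  have hpart : ∀ n, ∑ k ∈ Finset.range n, ε k ≤ E :=
    fun n => hεs.sum_le_tsum _ (fun i _ => hε i)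
  have hca : ∀ n, c n ≤ a n := by
    intro n
    nlinarith [hkey n, sq_nonneg (b n), ha n, hc n]
  have haM : ∀ n, a n ≤ a 0 + E := by
    have key : ∀ n, a n ≤ a 0 + ∑ k ∈ Finset.range n, ε k := by
      intro n
      induction n with
      | zero => simp
      | succ m ih =>
        calc a (m + 1) ≤ c m + ε m := htri m
          _ ≤ a m + ε m := by linarith [hca m]
          _ ≤ a 0 + ∑ k ∈ Finset.range m, ε k + ε m := by linarith
          _ = a 0 + ∑ k ∈ Finset.range (m + 1), ε k := by
              rw [Finset.sum_range_succ]; ring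
    exact fun n => le_trans (key n) (by linarith [hpart n])
  set M := a 0 + E with hM
  have hM0 : 0 ≤ M := le_trans (ha 0) (haM 0)
  set K := 2 * M + E with hK
  have hbsq : ∀ n, b n ^ 2 ≤ a n ^ 2 - a (n + 1) ^ 2 + K * ε n := by
    intro n
    have h1 : a (n + 1) ^ 2 ≤ (c n + ε n) ^ 2 :=
      pow_le_pow_left₀ (ha (n + 1)) (htri n) 2
    have h2 : c n ≤ M := le_trans (hca n) (haM n)
    nlinarith [hkey n, hεE n, hε n, hc n]
  refine summable_of_sum_range_le (c := a 0 ^ 2 + K * E) (fun n => sq_nonneg _) ?_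
  intro N
  have tele : ∑ n ∈ Finset.range N, (a n ^ 2 - a (n + 1) ^ 2) = a 0 ^ 2 - a N ^ 2 :=
    Finset.sum_range_sub' (fun n => a n ^ 2) N
  calc ∑ n ∈ Finset.range N, b n ^ 2
      ≤ ∑ n ∈ Finset.range N, (a n ^ 2 - a (n + 1) ^ 2 + K * ε n) :=
        Finset.sum_le_sum (fun n _ => hbsq n)
    _ = (a 0 ^ 2 - a N ^ 2) + K * ∑ n ∈ Finset.range N, ε n := by
        rw [Finset.sum_add_distrib, tele, Finset.mul_sum]
    _ ≤ a 0 ^ 2 + K * E := by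
        have h1 : K * ∑ n ∈ Finset.range N, ε n ≤ K * E :=
          mul_le_mul_of_nonneg_left (hpart N) (by linarith)
        nlinarith [sq_nonneg (a N)]

end Fejer

end AuxProof

/-- Asymptotic regularity of the inexact JKO scheme: the squared displacements are
summable, in particular `W2(J_{τ_n}(μ_n), μ_n) → 0`. -/
theorem inexact_jko_asymptotic_regularity {d : ℕ} (G : Measure (Ed d) → EReal)
    (hProper : ProperOn G) (hLsc : LscW2 G) (hConv : ConvexAlongGenGeod G)
    (hArgmin : ∃ μstar, IsArgminG G μstar)
    (ε : ℕ → ℝ) (hε : ∀ n, 0 ≤ ε n) (hεsum : Summable ε)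
    (τ : ℕ → ℝ) (hτ : ∀ n, 0 < τ n)
    (J : ℝ → Measure (Ed d) → Measure (Ed d))
    (hJ : ∀ t : ℝ, 0 < t → ∀ μ ∈ P2 d, IsJKOMin G t μ (J t μ))
    (μ : ℕ → Measure (Ed d)) (hμ : ∀ n, μ n ∈ P2 d)
    (herr : ∀ n, W2 (μ (n + 1)) (J (τ n) (μ n)) ≤ ε n) :
    Summable (fun n => (W2 (J (τ n) (μ n)) (μ n)) ^ 2) ∧
      Tendsto (fun n => W2 (J (τ n) (μ n)) (μ n)) atTop (𝓝 0) := by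
  obtain ⟨μstar, hstar⟩ := hArgmin
  have hJmin : ∀ n, IsJKOMin G (τ n) (μ n) (J (τ n) (μ n)) :=
    fun n => hJ (τ n) (hτ n) (μ n) (hμ n)
  have hJP2 : ∀ n, J (τ n) (μ n) ∈ P2 d := fun n => (hJmin n).1
  have hkey : ∀ n, W2 (J (τ n) (μ n)) (μ n) ^ 2 + W2 (J (τ n) (μ n)) μstar ^ 2
      ≤ W2 (μ n) μstar ^ 2 := by
    intro n
    have h := var_ineq G hProper hConv (hτ n) (hμ n) (hJmin n) hstar
    rw [W2_comm μstar (μ n)] at h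
    exact h
  have htri : ∀ n, W2 (μ (n + 1)) μstar
      ≤ W2 (J (τ n) (μ n)) μstar + ε n := by
    intro n
    have h := W2_triangle (μ (n + 1)) (J (τ n) (μ n)) μstar (hμ (n + 1)) (hJP2 n) hstar.1
    linarith [herr n]
  have hsum : Summable (fun n => W2 (J (τ n) (μ n)) (μ n) ^ 2) :=
    fejer (fun n => W2 (μ n) μstar) (fun n => W2 (J (τ n) (μ n)) (μ n))
      (fun n => W2 (J (τ n) (μ n)) μstar) ε
      (fun n => W2_nonneg _ _) (fun n => W2_nonneg _ _) (fun n => W2_nonneg _ _)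
      hε hεsum hkey htri
  refine ⟨hsum, ?_⟩
  have h2 : Tendsto (fun n => W2 (J (τ n) (μ n)) (μ n) ^ 2) atTop (𝓝 0) :=
    hsum.tendsto_atTop_zero
  have h3 : Tendsto (fun n => Real.sqrt (W2 (J (τ n) (μ n)) (μ n) ^ 2)) atTop
      (𝓝 (Real.sqrt 0)) := (Real.continuous_sqrt.tendsto 0).comp h2
  rw [Real.sqrt_zero] at h3
  exact h3.congr (fun n => Real.sqrt_sq (W2_nonneg _ _))
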